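/- arXiv:1803.11465 — 5 statements merged into one kernel-verified Lean document; each statement's English description precedes it below -/
import Mathlib

section
/- Let p ∈ (0,1) with p ≠ 1/2, α > 0, and n ≥ 0 an even integer. Then p · ∏_{j=0}^{n} (pα + j) + (-1)^{n+1} (1-p) · ∏_{j=0}^{n} ((1-p)α + j) ≠ 0. -/
open Finset

lemma strictMonoOn_mul_prod_range_mul_add {α : ℝ} (hα : 0 < α) (m : ℕ) :
    StrictMonoOn (fun x : ℝ => x * ∏ j ∈ range m, (x * α + j)) (Set.Ioi 0) := by
  intro x hx y _ hxy
  have hx : 0 < x := hx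
  have hfactor_pos : ∀ j : ℕ, 0 < x * α + j := fun j => by positivity
  have hprod_pos : 0 < ∏ j ∈ range m, (x * α + j) := prod_pos fun j _ => hfactor_pos j
  have hprod_le : ∏ j ∈ range m, (x * α + j) ≤ ∏ j ∈ range m, (y * α + j) :=
    prod_le_prod (fun j _ => (hfactor_pos j).le) fun j _ => by gcongr
  calc x * ∏ j ∈ range m, (x * α + j)
      < y * ∏ j ∈ range m, (x * α + j) := by gcongr
    _ ≤ y * ∏ j ∈ range m, (y * α + j) := by gcongr; linarith

/-- For `p ∈ (0,1)`, `p ≠ 1/2`, `α > 0` and even `n ≥ 0`,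
`p·∏_{j=0}^n (pα+j) + (-1)^{n+1} (1-p)·∏_{j=0}^n ((1-p)α+j) ≠ 0`. -/
theorem stmt4 (p α : ℝ) (hp : p ∈ Set.Ioo (0 : ℝ) 1) (hp2 : p ≠ 1 / 2) (hα : 0 < α)
    (n : ℕ) (hn : Even n) :
    p * ∏ j ∈ Finset.range (n + 1), (p * α + j) +
      (-1 : ℝ) ^ (n + 1) * ((1 - p) * ∏ j ∈ Finset.range (n + 1), ((1 - p) * α + j)) ≠ 0 := by
  obtain ⟨hp0, hp1⟩ := hp
  have hp_ne : p ≠ 1 - p := fun h => hp2 (by linarith)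
  have hvalues_ne := (strictMonoOn_mul_prod_range_mul_add hα (n + 1)).injOn.ne
    (Set.mem_Ioi.2 hp0) (Set.mem_Ioi.2 (sub_pos.2 hp1)) hp_ne
  rw [hn.add_one.neg_one_pow, neg_one_mul, ← sub_eq_add_neg]
  exact sub_ne_zero.2 hvalues_ne
end

section
/- Let ζ be a random variable with values in [0,∞) satisfying E[f(ζ)·ζ] = E[∫ f((1-u)ζ + u) G(du)] for the functions f ≡ 1 and f(x) = x, where G is a probability measure on [0,1]. Then E[ζ] = 1 and E[ζ²] = 1, hence P(ζ = 1) = 1. -/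
open MeasureTheory

/-- Suppose `ζ ≥ 0` satisfies `E[f(ζ)·ζ] = E[∫ f((1-u)ζ + u) G(du)]` for `f ≡ 1`
and `f = id`, where `G` is a probability measure on `[0,1]`.
Then `E[ζ] = 1`, `E[ζ²] = 1`, and `P(ζ = 1) = 1`. -/
theorem stmt7 {Ω : Type*} [MeasurableSpace Ω] (P : Measure Ω) [IsProbabilityMeasure P]
    (ζ : Ω → ℝ) (hζm : Measurable ζ) (hζ0 : ∀ ω, 0 ≤ ζ ω)
    (G : Measure ℝ) [IsProbabilityMeasure G] (hG : G (Set.Icc 0 1) = 1)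
    (h1 : ∫ ω, (1 : ℝ) * ζ ω ∂P = ∫ ω, (∫ u, (1 : ℝ) ∂G) ∂P)
    (h2 : ∫ ω, ζ ω * ζ ω ∂P = ∫ ω, (∫ u, ((1 - u) * ζ ω + u) ∂G) ∂P) :
    (∫ ω, ζ ω ∂P = 1) ∧ (∫ ω, ζ ω ^ 2 ∂P = 1) ∧ (∀ᵐ ω ∂P, ζ ω = 1) := by
  -- E[ζ] = 1
  have hEζ : ∫ ω, ζ ω ∂P = 1 := by
    simpa [measure_univ] using h1
  have hIntζ : Integrable ζ P := by
    by_contra h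
    rw [integral_undef h] at hEζ
    norm_num at hEζ
  -- G-a.e. u ∈ [0,1]
  have hae : ∀ᵐ u ∂G, u ∈ Set.Icc (0 : ℝ) 1 := by
    have : G (Set.Icc (0:ℝ) 1)ᶜ = 0 :=
      (prob_compl_eq_zero_iff measurableSet_Icc).mpr hG
    exact mem_ae_iff.mpr this
  have hIntId : Integrable (fun u : ℝ => u) G := by
    refine Integrable.mono' (integrable_const 1) measurable_id.aestronglyMeasurable ?_
    filter_upwards [hae] with u hu
    rw [Real.norm_eq_abs, abs_le]
    constructor <;> [linarith [hu.1]; exact hu.2]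
  set m : ℝ := ∫ u, u ∂G with hm
  -- inner integral
  have hinner : ∀ c : ℝ, ∫ u, ((1 - u) * c + u) ∂G = c + (1 - c) * m := by
    intro c
    have : ∀ u : ℝ, (1 - u) * c + u = c + (1 - c) * u := fun u => by ring
    simp_rw [this]
    rw [integral_add (integrable_const c) (hIntId.const_mul _), integral_const,
      integral_const_mul, probReal_univ]
    simp [hm]
  -- E[ζ²] = 1
  have hIntA : Integrable (fun ω => (1 - ζ ω) * m) P :=
    ((integrable_const (1:ℝ)).sub hIntζ).mul_const m
  have hIntB : Integrable (fun ω => 1 - ζ ω) P := (integrable_const (1:ℝ)).sub hIntζ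
  have hEζ2 : ∫ ω, ζ ω * ζ ω ∂P = 1 := by
    rw [h2]
    simp_rw [hinner]
    rw [integral_add hIntζ hIntA, integral_mul_const, integral_sub (integrable_const 1) hIntζ,
      integral_const, probReal_univ, hEζ]
    simp
  have hIntζ2 : Integrable (fun ω => ζ ω * ζ ω) P := by
    by_contra h
    rw [integral_undef h] at hEζ2
    norm_num at hEζ2
  have hEsq : ∫ ω, ζ ω ^ 2 ∂P = 1 := by
    simpa [pow_two] using hEζ2
  refine ⟨hEζ, hEsq, ?_⟩
  -- variance zero
  have hIntC : Integrable (fun ω => ζ ω * ζ ω - 2 * ζ ω) P := hIntζ2.sub (hIntζ.const_mul 2)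
  have hIntD : Integrable (fun ω => 2 * ζ ω) P := hIntζ.const_mul 2
  have hIntv : Integrable (fun ω => (ζ ω - 1) ^ 2) P := by
    have : (fun ω => (ζ ω - 1) ^ 2) = fun ω => ζ ω * ζ ω - 2 * ζ ω + 1 := by
      funext ω; ring
    rw [this]
    exact hIntC.add (integrable_const 1)
  have hv : ∫ ω, (ζ ω - 1) ^ 2 ∂P = 0 := by
    have : (fun ω => (ζ ω - 1) ^ 2) = fun ω => ζ ω * ζ ω - 2 * ζ ω + 1 := by
      funext ω; ring
    rw [this, integral_add hIntC (integrable_const 1),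
      integral_sub hIntζ2 hIntD, integral_const_mul, hEζ, hEζ2,
      integral_const, probReal_univ]
    norm_num
  have h0 : (fun ω => (ζ ω - 1) ^ 2) =ᵐ[P] 0 := by
    rw [← integral_eq_zero_iff_of_nonneg (fun ω => sq_nonneg _) hIntv]
    exact hv
  filter_upwards [h0] with ω hω
  have : (ζ ω - 1) ^ 2 = 0 := hω
  nlinarith [sq_nonneg (ζ ω - 1)]
end

section
/- Let α > 0, p ∈ (0,1), let Z ~ Be(pα, (1-p)α) and W ~ Be(1, α) be independent. Then for every bounded measurable g : [0,1] → ℝ (equivalently all measurable g ≥ 0), E[g(Z)·Z] = p · E[g((1-W)Z + W)]. -/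
open MeasureTheory

/-- The Beta distribution `Be(a,b)` on `ℝ`: the measure with density
`x ↦ x^(a-1) (1-x)^(b-1) / B(a,b)` on `(0,1)` with respect to Lebesgue measure. -/
noncomputable def betaMeasure (a b : ℝ) : Measure ℝ :=
  volume.withDensity fun x =>
    ENNReal.ofReal (Set.indicator (Set.Ioo 0 1)
      (fun t => Real.Gamma (a + b) / (Real.Gamma a * Real.Gamma b) *
        (t ^ (a - 1) * (1 - t) ^ (b - 1))) x)

open ProbabilityTheory
open scoped ENNReal NNReal

/-!
Write `a = pα`, `b = (1-p)α`. Given `W = w`, the point `(1-W)Z + W` is `Z` mapped affinely onto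
`(w,1)`; under `u = (1-w)z + w` the joint density of `(W, (1-W)Z + W)` becomes
`(a+b)/B(a,b) · (u-w)^(a-1) (1-u)^(b-1)` on `0 < w < u < 1`, all powers of `1-w` cancelling
because `W ~ Be(1,a+b)`. Integrating out `w` gives `(1-W)Z + W ~ Be(a+1,b)`, and
`u · Be(a,b)(du) = a/(a+b) · Be(a+1,b)(du)` with `a/(a+b) = p`.
-/

open Set

lemma betaMeasure_eq_probabilityTheory_betaMeasure (a b : ℝ) :
    _root_.betaMeasure a b = ProbabilityTheory.betaMeasure a b := by
  rw [_root_.betaMeasure, ProbabilityTheory.betaMeasure]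
  congr 1
  funext x
  simp only [betaPDF, betaPDFReal, beta, indicator_apply, mem_Ioo]
  split_ifs <;> simp only [one_div_div, mul_assoc]

-- Inside this namespace `betaMeasure` resolves to `ProbabilityTheory.betaMeasure`.
namespace ProbabilityTheory

lemma beta_one_left {c : ℝ} (hc : 0 < c) : beta 1 c = c⁻¹ := by
  rw [beta, Real.Gamma_one, one_mul, add_comm, Real.Gamma_add_one hc.ne']
  field_simp [(Real.Gamma_pos_of_pos hc).ne']

lemma beta_add_one_left {a b : ℝ} (ha : 0 < a) (hb : 0 < b) :
    beta (a + 1) b = a / (a + b) * beta a b := by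
  rw [beta, beta, Real.Gamma_add_one ha.ne', add_right_comm, Real.Gamma_add_one (by positivity)]
  field_simp [(Real.Gamma_pos_of_pos (add_pos ha hb)).ne']

lemma mul_betaPDFReal {a b : ℝ} (ha : 0 < a) (hb : 0 < b) (x : ℝ) :
    x * betaPDFReal a b x = a / (a + b) * betaPDFReal (a + 1) b x := by
  simp only [betaPDFReal]
  split_ifs with hx
  · rw [beta_add_one_left ha hb, add_sub_cancel_right, Real.rpow_sub_one hx.1.ne']
    field_simp [hx.1.ne', (beta_pos ha hb).ne']
  · simp

lemma lintegral_betaMeasure (a b : ℝ) (f : ℝ → ℝ≥0∞) :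
    ∫⁻ x, f x ∂betaMeasure a b = ∫⁻ x in Ioo 0 1, betaPDF a b x * f x := by
  rw [betaMeasure, lintegral_withDensity_eq_lintegral_mul_non_measurable _ (f := betaPDF a b)
    (measurable_betaPDFReal a b).ennreal_ofReal (ae_of_all _ fun _ => ENNReal.ofReal_lt_top)]
  refine (setLIntegral_eq_of_support_subset
    ((Function.support_mul_subset_left _ _).trans fun x hx => ?_)).symm
  by_contra h
  exact hx (by simp [betaPDF, betaPDFReal, show ¬(0 < x ∧ x < 1) from h])

lemma lintegral_mul_ofReal_betaMeasure {a b : ℝ} (ha : 0 < a) (hb : 0 < b)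
    (f : ℝ → ℝ≥0∞) :
    ∫⁻ x, f x * ENNReal.ofReal x ∂betaMeasure a b
      = ENNReal.ofReal (a / (a + b)) * ∫⁻ x, f x ∂betaMeasure (a + 1) b := by
  rw [lintegral_betaMeasure, lintegral_betaMeasure,
    ← lintegral_const_mul' _ _ ENNReal.ofReal_ne_top]
  refine setLIntegral_congr_fun measurableSet_Ioo fun x hx => ?_
  calc betaPDF a b x * (f x * ENNReal.ofReal x)
      = ENNReal.ofReal (x * betaPDFReal a b x) * f x := by
        rw [betaPDF, ENNReal.ofReal_mul hx.1.le]; ring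
    _ = ENNReal.ofReal (a / (a + b)) * (betaPDF (a + 1) b x * f x) := by
        rw [mul_betaPDFReal ha hb, ENNReal.ofReal_mul (by positivity), betaPDF, mul_assoc]

lemma lintegral_Ioo_rpow_sub {a u : ℝ} (ha : 0 < a) (hu : 0 < u) :
    ∫⁻ w in Ioo 0 u, ENNReal.ofReal ((u - w) ^ (a - 1)) = ENNReal.ofReal (u ^ a / a) := by
  have hint : IntervalIntegrable (fun w => (u - w) ^ (a - 1)) volume 0 u := by
    simpa using (intervalIntegral.intervalIntegrable_rpow' (a := 0) (b := u)
      (show -1 < a - 1 by linarith)).comp_sub_left u |>.symm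
  rw [← ofReal_integral_eq_lintegral_ofReal
      ((intervalIntegrable_iff_integrableOn_Ioo_of_le hu.le).1 hint)
      (ae_restrict_of_forall_mem measurableSet_Ioo fun w hw =>
        Real.rpow_nonneg (sub_nonneg.2 hw.2.le) _),
    ← integral_Ioc_eq_integral_Ioo, ← intervalIntegral.integral_of_le hu.le,
    intervalIntegral.integral_comp_sub_left (fun t => t ^ (a - 1)), sub_self, sub_zero,
    integral_rpow (Or.inl (by linarith)), sub_add_cancel, Real.zero_rpow ha.ne', sub_zero]

lemma lintegral_Ioo_lintegral_Ioo_swap {a b : ℝ} {f : ℝ → ℝ → ℝ≥0∞}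
    (hf : Measurable (Function.uncurry f)) :
    ∫⁻ x in Ioo a b, ∫⁻ y in Ioo x b, f x y
      = ∫⁻ y in Ioo a b, ∫⁻ x in Ioo a y, f x y := by
  set F : ℝ → ℝ → ℝ≥0∞ := fun x y => if x < y then f x y else 0
  have hF : Measurable (Function.uncurry F) :=
    Measurable.ite (measurableSet_lt measurable_fst measurable_snd) hf measurable_const
  have hleft : ∀ x ∈ Ioo a b, ∫⁻ y in Ioo x b, f x y = ∫⁻ y in Ioo a b, F x y := by
    intro x hx
    have hFx : ∀ y, F x y = (Ioi x).indicator (f x) y := fun y => by simp [F, indicator_apply]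
    have hs : Ioi x ∩ Ioo a b = Ioo x b := by
      rw [← Ioi_inter_Iio, ← inter_assoc, Ioi_inter_Ioi, max_eq_left hx.1.le, Ioi_inter_Iio]
    simp only [hFx, setLIntegral_indicator measurableSet_Ioi, hs]
  have hright : ∀ y ∈ Ioo a b, ∫⁻ x in Ioo a y, f x y = ∫⁻ x in Ioo a b, F x y := by
    intro y hy
    have hFy : ∀ x, F x y = (Iio y).indicator (f · y) x := fun x => by simp [F, indicator_apply]
    have hs : Iio y ∩ Ioo a b = Ioo a y := by
      rw [← Ioi_inter_Iio, inter_left_comm, Iio_inter_Iio, min_eq_left hy.2.le, Ioi_inter_Iio]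
    simp only [hFy, setLIntegral_indicator measurableSet_Iio, hs]
  rw [setLIntegral_congr_fun measurableSet_Ioo hleft,
    setLIntegral_congr_fun measurableSet_Ioo hright]
  exact lintegral_lintegral_swap hF.aemeasurable

lemma betaPDF_one_mul_lintegral_comp_affine {a b w : ℝ} (ha : 0 < a) (hb : 0 < b)
    (hw : w ∈ Ioo 0 1) (g : ℝ → ℝ≥0∞) :
    betaPDF 1 (a + b) w * ∫⁻ z, g ((1 - w) * z + w) ∂betaMeasure a b
      = ∫⁻ u in Ioo w 1,
          ENNReal.ofReal ((a + b) / beta a b * (u - w) ^ (a - 1) * (1 - u) ^ (b - 1)) * g u := by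
  have hw1 : 0 < 1 - w := sub_pos.2 hw.2
  have himage : (fun z => (1 - w) * z + w) '' Ioo 0 1 = Ioo w 1 := by
    rw [image_affine_Ioo hw1]; simp
  rw [lintegral_betaMeasure, ← himage,
    lintegral_image_eq_lintegral_abs_deriv_mul measurableSet_Ioo
      (fun z _ => (((hasDerivAt_id' z).const_mul (1 - w)).add_const w).hasDerivWithinAt)
      (fun x _ y _ h => mul_left_cancel₀ hw1.ne' (add_right_cancel h)),
    ← lintegral_const_mul' (betaPDF 1 (a + b) w) _ ENNReal.ofReal_ne_top]
  refine setLIntegral_congr_fun measurableSet_Ioo fun z hz => ?_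
  have hu : (1 - w) * z + w - w = (1 - w) * z := by ring
  have hv : 1 - ((1 - w) * z + w) = (1 - w) * (1 - z) := by ring
  have hc : (1 - w) ^ (a + b - 1) = (1 - w) * (1 - w) ^ (a - 1) * (1 - w) ^ (b - 1) := by
    rw [show a + b - 1 = 1 + (a - 1) + (b - 1) by ring, Real.rpow_add hw1, Real.rpow_add hw1,
      Real.rpow_one]
  calc betaPDF 1 (a + b) w * (betaPDF a b z * g ((1 - w) * z + w))
      = ENNReal.ofReal (betaPDFReal 1 (a + b) w * betaPDFReal a b z) * g ((1 - w) * z + w) := by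
        rw [betaPDF, betaPDF,
          ENNReal.ofReal_mul (betaPDFReal_pos hw.1 hw.2 one_pos (by positivity)).le, mul_assoc]
    _ = _ := by
        rw [← mul_assoc, ← ENNReal.ofReal_mul (abs_nonneg _), hu, hv, mul_one, abs_of_pos hw1,
          betaPDFReal, betaPDFReal, if_pos (mem_Ioo.1 hw), if_pos (mem_Ioo.1 hz),
          beta_one_left (by positivity), Real.mul_rpow hw1.le hz.1.le,
          Real.mul_rpow hw1.le (sub_pos.2 hz.2).le, hc, sub_self, Real.rpow_zero]
        congr 2
        field_simp

lemma lintegral_Ioo_eq_betaPDF_add_one {a b u : ℝ} (ha : 0 < a) (hb : 0 < b)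
    (hu : u ∈ Ioo 0 1) :
    ∫⁻ w in Ioo 0 u, ENNReal.ofReal ((a + b) / beta a b * (u - w) ^ (a - 1) * (1 - u) ^ (b - 1))
      = betaPDF (a + 1) b u := by
  calc ∫⁻ w in Ioo 0 u,
        ENNReal.ofReal ((a + b) / beta a b * (u - w) ^ (a - 1) * (1 - u) ^ (b - 1))
      = ∫⁻ w in Ioo 0 u, ENNReal.ofReal ((u - w) ^ (a - 1))
          * ENNReal.ofReal ((a + b) / beta a b * (1 - u) ^ (b - 1)) := by
        refine setLIntegral_congr_fun measurableSet_Ioo fun w hw => ?_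
        rw [← ENNReal.ofReal_mul (Real.rpow_nonneg (sub_nonneg.2 hw.2.le) _)]
        congr 1
        ring
    _ = ENNReal.ofReal (u ^ a / a) * ENNReal.ofReal ((a + b) / beta a b * (1 - u) ^ (b - 1)) := by
        rw [lintegral_mul_const _ (by fun_prop), lintegral_Ioo_rpow_sub ha hu.1]
    _ = betaPDF (a + 1) b u := by
        rw [← ENNReal.ofReal_mul (div_nonneg (Real.rpow_nonneg hu.1.le _) ha.le),
          betaPDF_of_pos_lt_one hu.1 hu.2, beta_add_one_left ha hb, add_sub_cancel_right]
        congr 1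
        field_simp

theorem map_betaMeasure_prod_betaMeasure {a b : ℝ} (ha : 0 < a) (hb : 0 < b) :
    ((betaMeasure a b).prod (betaMeasure 1 (a + b))).map (fun x => (1 - x.2) * x.1 + x.2)
      = betaMeasure (a + 1) b := by
  have := isProbabilityMeasureBeta ha hb
  have := isProbabilityMeasureBeta one_pos (add_pos ha hb)
  refine Measure.ext_of_lintegral _ fun g hg => ?_
  rw [lintegral_map hg (by fun_prop),
    lintegral_prod_symm' (fun x => g ((1 - x.2) * x.1 + x.2)) (by fun_prop),
    lintegral_betaMeasure, lintegral_betaMeasure]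
  calc ∫⁻ w in Ioo 0 1, betaPDF 1 (a + b) w * ∫⁻ z, g ((1 - w) * z + w) ∂betaMeasure a b
      = ∫⁻ w in Ioo 0 1, ∫⁻ u in Ioo w 1,
          ENNReal.ofReal ((a + b) / beta a b * (u - w) ^ (a - 1) * (1 - u) ^ (b - 1)) * g u :=
        setLIntegral_congr_fun measurableSet_Ioo fun w hw =>
          betaPDF_one_mul_lintegral_comp_affine ha hb hw g
    _ = ∫⁻ u in Ioo 0 1, ∫⁻ w in Ioo 0 u,
          ENNReal.ofReal ((a + b) / beta a b * (u - w) ^ (a - 1) * (1 - u) ^ (b - 1)) * g u :=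
        lintegral_Ioo_lintegral_Ioo_swap (by fun_prop)
    _ = ∫⁻ u in Ioo 0 1, betaPDF (a + 1) b u * g u :=
        setLIntegral_congr_fun measurableSet_Ioo fun u hu => by
          rw [lintegral_mul_const _ (by fun_prop), lintegral_Ioo_eq_betaPDF_add_one ha hb hu]

end ProbabilityTheory

/-- If `Z ~ Be(pα, (1-p)α)` and `W ~ Be(1, α)` are independent, `p ∈ (0,1)`, `α > 0`,
then for every measurable `g ≥ 0`, `E[g(Z)·Z] = p·E[g((1-W)Z + W)]`. -/
theorem stmt10 {Ω : Type*} [MeasurableSpace Ω] (P : Measure Ω) [IsProbabilityMeasure P]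
    (p α : ℝ) (hp : p ∈ Set.Ioo (0 : ℝ) 1) (hα : 0 < α)
    (Z W : Ω → ℝ) (hZm : Measurable Z) (hWm : Measurable W) (hindep : IndepFun Z W P)
    (hZ : P.map Z = _root_.betaMeasure (p * α) ((1 - p) * α)) (hW : P.map W = _root_.betaMeasure 1 α)
    (g : ℝ → ℝ≥0∞) (hg : Measurable g) :
    ∫⁻ ω, g (Z ω) * ENNReal.ofReal (Z ω) ∂P
      = ENNReal.ofReal p * ∫⁻ ω, g ((1 - W ω) * Z ω + W ω) ∂P := by
  obtain ⟨hp0, hp1⟩ := hp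
  have ha : 0 < p * α := mul_pos hp0 hα
  have hb : 0 < (1 - p) * α := mul_pos (sub_pos.2 hp1) hα
  have hab : p * α + (1 - p) * α = α := by ring
  rw [betaMeasure_eq_probabilityTheory_betaMeasure] at hZ hW
  rw [← hab] at hW
  have hV : P.map (fun ω => (1 - W ω) * Z ω + W ω)
      = ProbabilityTheory.betaMeasure (p * α + 1) ((1 - p) * α) := by
    rw [← map_betaMeasure_prod_betaMeasure ha hb, ← hZ, ← hW,
      ← (indepFun_iff_map_prod_eq_prod_map_map hZm.aemeasurable hWm.aemeasurable).1 hindep,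
      Measure.map_map (by fun_prop) (by fun_prop)]
    rfl
  calc ∫⁻ ω, g (Z ω) * ENNReal.ofReal (Z ω) ∂P
      = ∫⁻ z, g z * ENNReal.ofReal z ∂P.map Z :=
        (lintegral_map (hg.mul ENNReal.measurable_ofReal) hZm).symm
    _ = ENNReal.ofReal p * ∫⁻ u, g u ∂P.map (fun ω => (1 - W ω) * Z ω + W ω) := by
      rw [hZ, lintegral_mul_ofReal_betaMeasure ha hb, hV, hab, mul_div_cancel_right₀ _ hα.ne']
    _ = ENNReal.ofReal p * ∫⁻ ω, g ((1 - W ω) * Z ω + W ω) ∂P := by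
      rw [lintegral_map hg (by fun_prop)]
end

section
/- Let Z and W be independent [0,1]-valued random variables, p ∈ (0,1), α := (1-E[W])/E[W] with E[W] ∈ (0,1), and suppose E[g(Z)Z] = p·E[g((1-W)Z + W)] for all measurable g ≥ 0 and E[g(Z)Z²] = c·E[g((1-W)Z + W)·W] for all measurable g ≥ 0 and some c ≥ 0. Then c = p(αp + 1). -/
open MeasureTheory

open ProbabilityTheory
open scoped ENNReal NNReal

/-!
Testing the two identities against `g = 1` and `g(x) = x` gives three moment equations:
`E[Z] = p`, `E[Z²] = p E[(1-W)Z + W] = p((1 - E[W]) p + E[W])` by independence,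
and `E[Z²] = c E[W]`. Dividing by `E[W]` yields `c = p(αp + 1)`.
-/

lemma one_sub_mul_add_mem_Icc {z w : ℝ} (hz : z ∈ Set.Icc (0 : ℝ) 1)
    (hw : w ∈ Set.Icc (0 : ℝ) 1) : (1 - w) * z + w ∈ Set.Icc (0 : ℝ) 1 := by
  obtain ⟨hz0, hz1⟩ := hz
  obtain ⟨hw0, hw1⟩ := hw
  constructor <;> nlinarith

section UnitIntervalValued

variable {Ω : Type*} [MeasurableSpace Ω] {μ : Measure Ω}

lemma integrable_of_mem_Icc [IsFiniteMeasure μ] {f : Ω → ℝ} (hf : Measurable f)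
    (hf01 : ∀ ω, f ω ∈ Set.Icc (0 : ℝ) 1) : Integrable f μ :=
  .of_bound hf.aestronglyMeasurable 1 <| ae_of_all _ fun ω => by
    rw [Real.norm_eq_abs, abs_le]
    exact ⟨by linarith [(hf01 ω).1], (hf01 ω).2⟩

lemma lintegral_ofReal_eq_ofReal_integral_of_mem_Icc [IsFiniteMeasure μ] {f : Ω → ℝ}
    (hf : Measurable f) (hf01 : ∀ ω, f ω ∈ Set.Icc (0 : ℝ) 1) :
    ∫⁻ ω, ENNReal.ofReal (f ω) ∂μ = ENNReal.ofReal (∫ ω, f ω ∂μ) :=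
  (ofReal_integral_eq_lintegral_ofReal (integrable_of_mem_Icc hf hf01)
    (ae_of_all _ fun ω => (hf01 ω).1)).symm

lemma integral_eq_of_lintegral_ofReal_eq [IsFiniteMeasure μ] {f : Ω → ℝ} (hf : Measurable f)
    (hf01 : ∀ ω, f ω ∈ Set.Icc (0 : ℝ) 1) {a : ℝ} (ha : 0 ≤ a)
    (h : ∫⁻ ω, ENNReal.ofReal (f ω) ∂μ = ENNReal.ofReal a) : ∫ ω, f ω ∂μ = a := by
  rw [lintegral_ofReal_eq_ofReal_integral_of_mem_Icc hf hf01] at h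
  exact (ENNReal.ofReal_eq_ofReal_iff (integral_nonneg fun ω => (hf01 ω).1) ha).1 h

lemma ProbabilityTheory.IndepFun.integral_one_sub_mul_add [IsProbabilityMeasure μ] {Z W : Ω → ℝ}
    (hindep : IndepFun Z W μ) (hZ : Integrable Z μ) (hW : Integrable W μ) :
    ∫ ω, ((1 - W ω) * Z ω + W ω) ∂μ = (1 - ∫ ω, W ω ∂μ) * ∫ ω, Z ω ∂μ + ∫ ω, W ω ∂μ := by
  have hindep' : IndepFun (fun ω => 1 - W ω) Z μ :=
    hindep.symm.comp (measurable_const.sub measurable_id) measurable_id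
  have h1W : Integrable (fun ω => 1 - W ω) μ := (integrable_const 1).sub hW
  have hprod : Integrable (fun ω => (1 - W ω) * Z ω) μ := hindep'.integrable_mul h1W hZ
  rw [integral_add hprod hW,
    hindep'.integral_fun_mul_eq_mul_integral h1W.aestronglyMeasurable hZ.aestronglyMeasurable,
    integral_sub (integrable_const 1) hW, integral_const, probReal_univ, one_smul]

end UnitIntervalValued

/-- If `Z, W` are independent `[0,1]`-valued random variables with `E[W] ∈ (0,1)`,
`p ∈ (0,1)`, `α := (1-E[W])/E[W]`, and for all measurable `g ≥ 0`:
`E[g(Z)Z] = p·E[g((1-W)Z+W)]` and `E[g(Z)Z²] = c·E[g((1-W)Z+W)·W]` with `c ≥ 0`,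
then `c = p(αp + 1)`. -/
theorem stmt13 {Ω : Type*} [MeasurableSpace Ω] (P : Measure Ω) [IsProbabilityMeasure P]
    (Z W : Ω → ℝ) (hZm : Measurable Z) (hWm : Measurable W)
    (hZ01 : ∀ ω, Z ω ∈ Set.Icc (0 : ℝ) 1) (hW01 : ∀ ω, W ω ∈ Set.Icc (0 : ℝ) 1)
    (hindep : IndepFun Z W P)
    (hEW : ∫ ω, W ω ∂P ∈ Set.Ioo (0 : ℝ) 1)
    (p c α : ℝ) (hp : p ∈ Set.Ioo (0 : ℝ) 1) (hc : 0 ≤ c)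
    (hαdef : α = (1 - ∫ ω, W ω ∂P) / ∫ ω, W ω ∂P)
    (heq1 : ∀ g : ℝ → ℝ≥0∞, Measurable g →
      ∫⁻ ω, g (Z ω) * ENNReal.ofReal (Z ω) ∂P
        = ENNReal.ofReal p * ∫⁻ ω, g ((1 - W ω) * Z ω + W ω) ∂P)
    (heq2 : ∀ g : ℝ → ℝ≥0∞, Measurable g →
      ∫⁻ ω, g (Z ω) * ENNReal.ofReal (Z ω) ^ 2 ∂P
        = ENNReal.ofReal c * ∫⁻ ω, g ((1 - W ω) * Z ω + W ω) * ENNReal.ofReal (W ω) ∂P) :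
    c = p * (α * p + 1) := by
  set m := ∫ ω, W ω ∂P
  have hZ2 : ∀ ω, Z ω ^ 2 ∈ Set.Icc (0 : ℝ) 1 := fun ω =>
    ⟨sq_nonneg _, pow_le_one₀ (hZ01 ω).1 (hZ01 ω).2⟩
  have hofReal_sq : ∀ ω, ENNReal.ofReal (Z ω) ^ 2 = ENNReal.ofReal (Z ω ^ 2) := fun ω =>
    (ENNReal.ofReal_pow (hZ01 ω).1 2).symm
  have hEZ : ∫ ω, Z ω ∂P = p := by
    have h := heq1 (fun _ => 1) measurable_const
    simp only [one_mul, lintegral_const, measure_univ, mul_one] at h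
    exact integral_eq_of_lintegral_ofReal_eq hZm hZ01 hp.1.le h
  have hEZ2 : ∫ ω, Z ω ^ 2 ∂P = p * ((1 - m) * p + m) := by
    have h := heq1 ENNReal.ofReal ENNReal.measurable_ofReal
    simp only [← sq, hofReal_sq] at h
    rw [lintegral_ofReal_eq_ofReal_integral_of_mem_Icc (by fun_prop)
        fun ω => one_sub_mul_add_mem_Icc (hZ01 ω) (hW01 ω),
      hindep.integral_one_sub_mul_add (integrable_of_mem_Icc hZm hZ01)
        (integrable_of_mem_Icc hWm hW01), hEZ, ← ENNReal.ofReal_mul hp.1.le] at h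
    have hEaff : 0 ≤ (1 - m) * p + m :=
      add_nonneg (mul_nonneg (sub_nonneg.2 hEW.2.le) hp.1.le) hEW.1.le
    exact integral_eq_of_lintegral_ofReal_eq (hZm.pow_const 2) hZ2
      (mul_nonneg hp.1.le hEaff) h
  have hEZ2' : ∫ ω, Z ω ^ 2 ∂P = c * m := by
    have h := heq2 (fun _ => 1) measurable_const
    simp only [one_mul, hofReal_sq] at h
    rw [lintegral_ofReal_eq_ofReal_integral_of_mem_Icc hWm hW01, ← ENNReal.ofReal_mul hc] at h
    exact integral_eq_of_lintegral_ofReal_eq (hZm.pow_const 2) hZ2 (mul_nonneg hc hEW.1.le) h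
  rw [hαdef]
  field_simp [hEW.1.ne']
  linarith
end

section
/- Fix nonnegative integers k_1,...,k_{n-1}, set k_0 := k_1 + ⋯ + k_{n-1}, and let α > 0, α_n > 0. Define b_k := (Γ(α)/Γ(α + k_0 + k)) · Γ(α_n + k)/Γ(α_n) · C, where C := ∏_{i=1}^{n-1} Γ(α_i + k_i)/Γ(α_i) for positive α_1,...,α_{n-1} with α = α_1 + ⋯ + α_n. Then the recursion b_{k+1} = α_n · Σ_{r=0}^{k} (k choose r) · b_r · Γ(k+1-r)Γ(k_0 + α + r)/Γ(α + k_0 + k + 1) holds for all k ≥ 0. -/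
/-!
Writing `b r = A · Γ(αₙ + r) / Γ(s + r)` with `s = α + k₀`, the factor `Γ(s + r)` in the `r`-th
summand cancels the denominator of `b r`, and `(k choose r) · Γ(k + 1 - r) = k! / r!`. The recursion
therefore reduces to the hockey-stick identity for rising factorials,
`a · ∑_{r ≤ k} Γ(a + r) / r! = Γ(a + k + 1) / k!`, which follows by induction on `k` from
`Γ(x + 1) = x Γ(x)`.
-/

open Finset Nat

namespace Real

lemma Gamma_add_natCast_ne_zero {s : ℝ} (hs : ∀ m : ℕ, s ≠ -m) (n : ℕ) : Gamma (s + n) ≠ 0 :=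
  Gamma_ne_zero fun m h => hs (n + m) (by push_cast; linarith)

lemma mul_sum_range_Gamma_add_div_factorial {a : ℝ} (ha : ∀ m : ℕ, a ≠ -m) (k : ℕ) :
    a * ∑ r ∈ range (k + 1), Gamma (a + r) / r ! = Gamma (a + k + 1) / k ! := by
  induction k with
  | zero => simp [Gamma_add_one (by simpa using ha 0)]
  | succ k ih =>
    have hk : a + k + 1 ≠ 0 := fun h => ha (k + 1) (by push_cast; linarith)
    rw [sum_range_succ, mul_add, ih, Nat.factorial_succ, Nat.cast_mul, Nat.cast_succ,
      ← add_assoc, Gamma_add_one hk]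
    field_simp
    ring

lemma choose_mul_Gamma_sub_add_one {k r : ℕ} (h : r ≤ k) :
    (k.choose r : ℝ) * Gamma (k + 1 - r) = k ! / r ! := by
  have hsub : (k : ℝ) + 1 - r = ((k - r : ℕ) : ℝ) + 1 := by push_cast [h]; ring
  rw [hsub, Gamma_nat_eq_factorial, eq_div_iff (by positivity), mul_right_comm]
  exact_mod_cast choose_mul_factorial_mul_factorial h

lemma mul_sum_range_choose_mul_Gamma {a : ℝ} (ha : ∀ m : ℕ, a ≠ -m) (k : ℕ) :
    a * ∑ r ∈ range (k + 1), (k.choose r : ℝ) * Gamma (k + 1 - r) * Gamma (a + r)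
      = Gamma (a + k + 1) := by
  have hterm : ∀ r ∈ range (k + 1), (k.choose r : ℝ) * Gamma (k + 1 - r) * Gamma (a + r)
      = k ! * (Gamma (a + r) / r !) := fun r hr => by
    rw [choose_mul_Gamma_sub_add_one (Nat.lt_succ_iff.mp (mem_range.mp hr))]
    ring
  rw [sum_congr rfl hterm, ← mul_sum, mul_left_comm, mul_sum_range_Gamma_add_div_factorial ha]
  field_simp

theorem Gamma_ratio_recursion {a s A : ℝ} (ha : ∀ m : ℕ, a ≠ -m) (hs : ∀ m : ℕ, s ≠ -m)
    {b : ℕ → ℝ} (hb : ∀ k : ℕ, b k = A * Gamma (a + k) / Gamma (s + k)) (k : ℕ) :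
    b (k + 1) = a * ∑ r ∈ range (k + 1), (k.choose r : ℝ) * b r *
      (Gamma ((k : ℝ) + 1 - r) * Gamma (s + r) / Gamma (s + k + 1)) := by
  have hterm : ∀ r ∈ range (k + 1), (k.choose r : ℝ) * b r *
      (Gamma ((k : ℝ) + 1 - r) * Gamma (s + r) / Gamma (s + k + 1))
        = A / Gamma (s + k + 1) * ((k.choose r : ℝ) * Gamma (k + 1 - r) * Gamma (a + r)) :=
    fun r _ => by
      rw [hb r]
      field_simp [Gamma_add_natCast_ne_zero hs r]
  rw [sum_congr rfl hterm, ← mul_sum, mul_left_comm, mul_sum_range_choose_mul_Gamma ha, hb]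
  rw [Nat.cast_succ, ← add_assoc, ← add_assoc]
  ring

end Real

theorem stmt17_general (m : ℕ) (as : Fin m → ℝ) (has : ∀ i, 0 < as i)
    (αn : ℝ) (hαn : 0 < αn)
    (α : ℝ) (hα : α = (∑ i, as i) + αn)
    (k₀ : ℕ)
    (C : ℝ)
    (b : ℕ → ℝ)
    (hb : ∀ k : ℕ, b k = Real.Gamma α / Real.Gamma (α + k₀ + k) *
      (Real.Gamma (αn + k) / Real.Gamma αn) * C) :
    ∀ k : ℕ, b (k + 1) = αn * ∑ r ∈ Finset.range (k + 1),
      (k.choose r : ℝ) * b r *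
        (Real.Gamma ((k : ℝ) + 1 - r) * Real.Gamma ((k₀ : ℝ) + α + r) /
          Real.Gamma (α + k₀ + k + 1)) := by
  have hαpos : 0 < α := by
    have : 0 ≤ ∑ i, as i := Finset.sum_nonneg fun i _ => (has i).le
    linarith
  have not_nonpos_int {x : ℝ} (hx : 0 < x) (m : ℕ) : x ≠ -m := by
    have : (0 : ℝ) ≤ m := m.cast_nonneg
    linarith
  have hb' : ∀ k : ℕ, b k = Real.Gamma α / Real.Gamma αn * C * Real.Gamma (αn + k) /
      Real.Gamma (α + k₀ + k) := fun k => by rw [hb]; ring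
  intro k
  rw [add_comm (k₀ : ℝ) α]
  exact Real.Gamma_ratio_recursion (not_nonpos_int hαn) (not_nonpos_int (by positivity)) hb' k

/-- With `k₀ := k₁ + ⋯ + k_{n-1}`, `α = α₁ + ⋯ + αₙ > 0`, `αₙ > 0`,
`C := ∏_{i<n} Γ(αᵢ+kᵢ)/Γ(αᵢ)` and `b_k := (Γ(α)/Γ(α+k₀+k))·(Γ(αₙ+k)/Γ(αₙ))·C`,
the recursion
`b_{k+1} = αₙ · ∑_{r=0}^k (k choose r) · b_r · Γ(k+1-r)Γ(k₀+α+r)/Γ(α+k₀+k+1)`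
holds for all `k ≥ 0`. (Here `m = n - 1` indexes the first `n-1` coordinates.) -/
theorem stmt17 (m : ℕ) (ks : Fin m → ℕ) (as : Fin m → ℝ) (has : ∀ i, 0 < as i)
    (αn : ℝ) (hαn : 0 < αn)
    (α : ℝ) (hα : α = (∑ i, as i) + αn)
    (k₀ : ℕ) (hk₀ : k₀ = ∑ i, ks i)
    (C : ℝ) (hC : C = ∏ i, Real.Gamma (as i + ks i) / Real.Gamma (as i))
    (b : ℕ → ℝ)
    (hb : ∀ k : ℕ, b k = Real.Gamma α / Real.Gamma (α + k₀ + k) *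
      (Real.Gamma (αn + k) / Real.Gamma αn) * C) :
    ∀ k : ℕ, b (k + 1) = αn * ∑ r ∈ Finset.range (k + 1),
      (k.choose r : ℝ) * b r *
        (Real.Gamma ((k : ℝ) + 1 - r) * Real.Gamma ((k₀ : ℝ) + α + r) /
          Real.Gamma (α + k₀ + k + 1)) :=
  stmt17_general m as has αn hαn α hα k₀ C b hb
end
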